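/- Let I and I' be intervals of ℝ, at least one of which is unbounded. (1) If I = I' = ℝ then d(χ_I, χ_{I'}) = 0. (2) If both I and I' are unbounded below and bounded above with suprema b and b' respectively, then d(χ_I, χ_{I'}) = |b−b'|. (3) If both I and I' are unbounded above and bounded below with infima a and a' respectively, then d(χ_I, χ_{I'}) = |a−a'|. (4) In all other cases (exactly one of I, I' is unbounded below, or exactly one is unbounded above), d(χ_I, χ_{I'}) = ∞. -/

import Mathlib

open CategoryTheory

universe u v

/-- The translation functor `a ↦ a + ε` on the poset category `(ℝ, ≤)`. -/
noncomputable def Tr (ε : ℝ) : ℝ ⥤ ℝ :=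
  Monotone.functor (f := fun a => a + ε) (fun _ _ h => by simpa using h)

/-- An `ε`-interleaving of `(ℝ,≤)`-indexed diagrams `F` and `G` in a category `D`:
natural transformations `φ : F ⇒ G ∘ T_ε` and `ψ : G ⇒ F ∘ T_ε` (given componentwise,
together with their naturality squares) such that the two triangle identities
`ψ(a+ε) ∘ φ(a) = F(a ≤ a+2ε)` and `φ(a+ε) ∘ ψ(a) = G(a ≤ a+2ε)` hold. Requires `0 ≤ ε`. -/
structure Interleaving {D : Type u} [Category.{v} D] (ε : ℝ) (F G : ℝ ⥤ D) where
  hε : 0 ≤ ε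
  φ : ∀ a : ℝ, F.obj a ⟶ G.obj (a + ε)
  ψ : ∀ a : ℝ, G.obj a ⟶ F.obj (a + ε)
  natφ : ∀ (a b : ℝ) (h : a ≤ b),
    F.map (homOfLE h) ≫ φ b = φ a ≫ G.map (homOfLE (by linarith : a + ε ≤ b + ε))
  natψ : ∀ (a b : ℝ) (h : a ≤ b),
    G.map (homOfLE h) ≫ ψ b = ψ a ≫ F.map (homOfLE (by linarith : a + ε ≤ b + ε))
  triφ : ∀ a : ℝ,
    φ a ≫ ψ (a + ε) = F.map (homOfLE (by linarith : a ≤ a + ε + ε))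
  triψ : ∀ a : ℝ,
    ψ a ≫ φ (a + ε) = G.map (homOfLE (by linarith : a ≤ a + ε + ε))

/-- `F` and `G` are `ε`-interleaved if an `ε`-interleaving exists. -/
def Interleaved {D : Type u} [Category.{v} D] (ε : ℝ) (F G : ℝ ⥤ D) : Prop :=
  Nonempty (Interleaving ε F G)

/-- The interleaving distance between two `(ℝ,≤)`-indexed diagrams, an extended
nonnegative real number; it is `∞` if `F` and `G` are not `ε`-interleaved for any `ε ≥ 0`. -/
noncomputable def interleavingDist {D : Type u} [Category.{v} D] (F G : ℝ ⥤ D) : ENNReal :=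
  sInf (ENNReal.ofReal '' {ε : ℝ | Interleaved ε F G})

open CategoryTheory Limits

noncomputable section

variable (𝕜 : Type) [Field 𝕜]

open Classical in
/-- The value of the interval module `χ_I` at `a : ℝ`: the field `𝕜` (as the full submodule
of itself) if `a ∈ I`, and `0` (the trivial submodule) otherwise. -/
def chiObj (I : Set ℝ) (a : ℝ) : Submodule 𝕜 𝕜 :=
  if a ∈ I then ⊤ else ⊥

open Classical in
/-- The structure map of the interval module `χ_I`: the identity of `𝕜` if `a, b ∈ I`,
and `0` otherwise. -/
def chiMap (I : Set ℝ) {a b : ℝ} (_ : a ≤ b) :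
    chiObj 𝕜 I a →ₗ[𝕜] chiObj 𝕜 I b :=
  if h : chiObj 𝕜 I a ≤ chiObj 𝕜 I b then Submodule.inclusion h else 0

open Classical in
lemma chiMap_val (I : Set ℝ) {a b : ℝ} (hab : a ≤ b) (x : chiObj 𝕜 I a) :
    (chiMap 𝕜 I hab x : 𝕜) = if b ∈ I then (x : 𝕜) else 0 := by
  by_cases hb : b ∈ I
  · have h : chiObj 𝕜 I a ≤ chiObj 𝕜 I b := by
      simp only [chiObj, if_pos hb]
      exact le_top
    rw [chiMap, dif_pos h, if_pos hb]
    rfl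
  · rw [if_neg hb]
    by_cases ha : a ∈ I
    · have h : ¬ chiObj 𝕜 I a ≤ chiObj 𝕜 I b := by
        simp only [chiObj, if_pos ha, if_neg hb]
        intro h
        have := h (Submodule.mem_top (x := (1 : 𝕜)))
        exact one_ne_zero ((Submodule.mem_bot 𝕜).mp this)
      rw [chiMap, dif_neg h]
      rfl
    · have hx : (x : 𝕜) = 0 := by
        have := x.2
        simp only [chiObj, if_neg ha] at this
        exact (Submodule.mem_bot 𝕜).mp this
      by_cases h : chiObj 𝕜 I a ≤ chiObj 𝕜 I b
      · rw [chiMap, dif_pos h]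
        simpa [Submodule.inclusion] using hx
      · rw [chiMap, dif_neg h]
        rfl

lemma chiMap_id (I : Set ℝ) (a : ℝ) :
    chiMap 𝕜 I (le_refl a) = LinearMap.id := by
  apply LinearMap.ext
  intro x
  apply Subtype.ext
  rw [chiMap_val]
  classical
  by_cases ha : a ∈ I
  · rw [if_pos ha]
    rfl
  · rw [if_neg ha]
    have := x.2
    simp only [chiObj, if_neg ha] at this
    have hx := (Submodule.mem_bot 𝕜).mp this
    simp [hx]

lemma chiMap_comp (I : Set ℝ) (hI : I.OrdConnected) {a b c : ℝ} (hab : a ≤ b) (hbc : b ≤ c) :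
    chiMap 𝕜 I hbc ∘ₗ chiMap 𝕜 I hab = chiMap 𝕜 I (hab.trans hbc) := by
  apply LinearMap.ext
  intro x
  apply Subtype.ext
  show (chiMap 𝕜 I hbc (chiMap 𝕜 I hab x) : 𝕜) = (chiMap 𝕜 I (hab.trans hbc) x : 𝕜)
  rw [chiMap_val, chiMap_val, chiMap_val]
  classical
  by_cases hc : c ∈ I
  · rw [if_pos hc, if_pos hc]
    by_cases hb : b ∈ I
    · rw [if_pos hb]
    · rw [if_neg hb]
      by_cases ha : a ∈ I
      · exact absurd (hI.out ha hc ⟨hab, hbc⟩) hb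
      · have := x.2
        simp only [chiObj, if_neg ha, Submodule.mem_bot] at this
        simp [this]
  · rw [if_neg hc, if_neg hc]

/-- The interval module (diagram) `χ_I : (ℝ,≤) ⥤ Vec` associated to an interval `I ⊆ ℝ`
(`Vec` is the category of finite-dimensional `𝕜`-vector spaces): it is `𝕜` on `I` with
identity structure maps, and `0` elsewhere. -/
def chi (I : Set ℝ) (hI : I.OrdConnected) : ℝ ⥤ FGModuleCat 𝕜 where
  obj a := FGModuleCat.of 𝕜 (chiObj 𝕜 I a)
  map {a b} h := FGModuleCat.ofHom (chiMap 𝕜 I (leOfHom h))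
  map_id a := by
    apply InducedCategory.hom_ext
    apply ModuleCat.hom_ext
    exact chiMap_id 𝕜 I a
  map_comp {a b c} h h' := by
    apply InducedCategory.hom_ext
    apply ModuleCat.hom_ext
    exact (chiMap_comp 𝕜 I hI (leOfHom h) (leOfHom h')).symm

end

section ChiAux

variable {𝕜 : Type} [Field 𝕜]

lemma chi_coe_eq_zero {I : Set ℝ} {a : ℝ} (ha : a ∉ I) (x : chiObj 𝕜 I a) : (x : 𝕜) = 0 := by
  have := x.2
  simpa [chiObj, ha] using this

open Classical in
/-- The indicator map between values of interval modules. -/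
noncomputable def indMap (I J : Set ℝ) (a b : ℝ) : chiObj 𝕜 I a →ₗ[𝕜] chiObj 𝕜 J b :=
  if h : b ∈ J then
    LinearMap.codRestrict (chiObj 𝕜 J b) ((chiObj 𝕜 I a).subtype)
      (fun x => by simp [chiObj, h])
  else 0

open Classical in
lemma indMap_val (I J : Set ℝ) (a b : ℝ) (x : chiObj 𝕜 I a) :
    (indMap I J a b x : 𝕜) = if b ∈ J then (x : 𝕜) else 0 := by
  by_cases h : b ∈ J
  · rw [indMap, dif_pos h, if_pos h]; rfl
  · rw [indMap, dif_neg h, if_neg h]; rfl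

/-- Build an interleaving from indicator maps. -/
lemma interleaved_of (I I' : Set ℝ) (hI : I.OrdConnected) (hI' : I'.OrdConnected)
    (ε : ℝ) (hε : 0 ≤ ε)
    (h1 : ∀ a b : ℝ, a ≤ b → a ∈ I → b ∈ I → b + ε ∈ I' → a + ε ∈ I')
    (h2 : ∀ a b : ℝ, a ≤ b → a ∈ I → a + ε ∈ I' → b + ε ∈ I' → b ∈ I)
    (h3 : ∀ a b : ℝ, a ≤ b → a ∈ I' → b ∈ I' → b + ε ∈ I → a + ε ∈ I)
    (h4 : ∀ a b : ℝ, a ≤ b → a ∈ I' → a + ε ∈ I → b + ε ∈ I → b ∈ I')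
    (h5 : ∀ a : ℝ, a ∈ I → a + ε + ε ∈ I → a + ε ∈ I')
    (h6 : ∀ a : ℝ, a ∈ I' → a + ε + ε ∈ I' → a + ε ∈ I) :
    Interleaved ε (chi 𝕜 I hI) (chi 𝕜 I' hI') := by
  classical
  refine ⟨⟨hε, fun a => FGModuleCat.ofHom (indMap I I' a (a + ε)), fun a => FGModuleCat.ofHom (indMap I' I a (a + ε)),
    ?_, ?_, ?_, ?_⟩⟩
  · intro a b hab
    apply FGModuleCat.hom_ext; apply LinearMap.ext; intro (x : chiObj 𝕜 I a); apply Subtype.ext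
    show (indMap I I' b (b + ε) (chiMap 𝕜 I hab x) : 𝕜)
      = (chiMap 𝕜 I' (show a + ε ≤ b + ε by linarith) (indMap I I' a (a + ε) x) : 𝕜)
    rw [indMap_val, chiMap_val, chiMap_val, indMap_val]
    by_cases ha : a ∈ I
    · by_cases hb' : b + ε ∈ I'
      · rw [if_pos hb', if_pos hb']
        by_cases hb : b ∈ I
        · rw [if_pos hb, if_pos (h1 a b hab ha hb hb')]
        · rw [if_neg hb]
          by_cases ha' : a + ε ∈ I'
          · exact absurd (h2 a b hab ha ha' hb') hb
          · rw [if_neg ha']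
      · rw [if_neg hb', if_neg hb']
    · have hx := chi_coe_eq_zero (𝕜 := 𝕜) ha x
      simp [hx]
  · intro a b hab
    apply FGModuleCat.hom_ext; apply LinearMap.ext; intro (x : chiObj 𝕜 I' a); apply Subtype.ext
    show (indMap I' I b (b + ε) (chiMap 𝕜 I' hab x) : 𝕜)
      = (chiMap 𝕜 I (show a + ε ≤ b + ε by linarith) (indMap I' I a (a + ε) x) : 𝕜)
    rw [indMap_val, chiMap_val, chiMap_val, indMap_val]
    by_cases ha : a ∈ I'
    · by_cases hb' : b + ε ∈ I
      · rw [if_pos hb', if_pos hb']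
        by_cases hb : b ∈ I'
        · rw [if_pos hb, if_pos (h3 a b hab ha hb hb')]
        · rw [if_neg hb]
          by_cases ha' : a + ε ∈ I
          · exact absurd (h4 a b hab ha ha' hb') hb
          · rw [if_neg ha']
      · rw [if_neg hb', if_neg hb']
    · have hx := chi_coe_eq_zero (𝕜 := 𝕜) ha x
      simp [hx]
  · intro a
    apply FGModuleCat.hom_ext; apply LinearMap.ext; intro (x : chiObj 𝕜 I a); apply Subtype.ext
    show (indMap I' I (a + ε) (a + ε + ε) (indMap I I' a (a + ε) x) : 𝕜)
      = (chiMap 𝕜 I (show a ≤ a + ε + ε by linarith) x : 𝕜)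
    rw [indMap_val, indMap_val, chiMap_val]
    by_cases ha : a ∈ I
    · by_cases h2e : a + ε + ε ∈ I
      · rw [if_pos h2e, if_pos h2e, if_pos (h5 a ha h2e)]
      · rw [if_neg h2e, if_neg h2e]
    · have hx := chi_coe_eq_zero (𝕜 := 𝕜) ha x
      simp [hx]
  · intro a
    apply FGModuleCat.hom_ext; apply LinearMap.ext; intro (x : chiObj 𝕜 I' a); apply Subtype.ext
    show (indMap I I' (a + ε) (a + ε + ε) (indMap I' I a (a + ε) x) : 𝕜)
      = (chiMap 𝕜 I' (show a ≤ a + ε + ε by linarith) x : 𝕜)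
    rw [indMap_val, indMap_val, chiMap_val]
    by_cases ha : a ∈ I'
    · by_cases h2e : a + ε + ε ∈ I'
      · rw [if_pos h2e, if_pos h2e, if_pos (h6 a ha h2e)]
      · rw [if_neg h2e, if_neg h2e]
    · have hx := chi_coe_eq_zero (𝕜 := 𝕜) ha x
      simp [hx]

/-- Obstruction to interleaving. -/
lemma no_interleaving {I I' : Set ℝ} {hI : I.OrdConnected} {hI' : I'.OrdConnected}
    {ε : ℝ} (h : Interleaving ε (chi 𝕜 I hI) (chi 𝕜 I' hI'))
    {a : ℝ} (ha : a ∈ I) (ha2 : a + ε + ε ∈ I) (hm : a + ε ∉ I') : False := by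
  classical
  have hε0 : 0 ≤ ε := h.hε
  have tri := h.triφ a
  set x : chiObj 𝕜 I a := ⟨1, by simp [chiObj, ha]⟩ with hxdef
  have h1x := congrArg (fun f => f x) tri
  simp only at h1x
  have h0 : (h.φ a ≫ h.ψ (a + ε)) x = 0 := by
    show h.ψ (a + ε) (h.φ a x) = 0
    have hy : h.φ a x = 0 := Subtype.ext (chi_coe_eq_zero hm _)
    rw [hy, map_zero]
  rw [h0] at h1x
  have h3 : chiMap 𝕜 I (show a ≤ a + ε + ε by linarith) x = 0 := by exact h1x.symm
  have h2 := chiMap_val 𝕜 I (show a ≤ a + ε + ε by linarith) x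
  rw [if_pos ha2, h3] at h2
  have hx1 : (x : 𝕜) = 1 := rfl
  rw [hx1] at h2
  simp at h2

end ChiAux

section DistAux

open CategoryTheory

lemma mem_of_le_of_not_bddBelow {I : Set ℝ} (hI : I.OrdConnected) (h : ¬ BddBelow I)
    {x y : ℝ} (hy : y ∈ I) (hxy : x ≤ y) : x ∈ I := by
  obtain ⟨z, hz, hzx⟩ := not_bddBelow_iff.mp h x
  exact hI.out hz hy ⟨hzx.le, hxy⟩

lemma mem_of_ge_of_not_bddAbove {I : Set ℝ} (hI : I.OrdConnected) (h : ¬ BddAbove I)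
    {x y : ℝ} (hy : y ∈ I) (hxy : y ≤ x) : x ∈ I := by
  obtain ⟨z, hz, hzx⟩ := not_bddAbove_iff.mp h x
  exact hI.out hy hz ⟨hxy, hzx.le⟩

lemma nonempty_of_not_bddBelow' {I : Set ℝ} (h : ¬ BddBelow I) : I.Nonempty := by
  obtain ⟨z, hz, _⟩ := not_bddBelow_iff.mp h 0
  exact ⟨z, hz⟩

lemma nonempty_of_not_bddAbove' {I : Set ℝ} (h : ¬ BddAbove I) : I.Nonempty := by
  obtain ⟨z, hz, _⟩ := not_bddAbove_iff.mp h 0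
  exact ⟨z, hz⟩

lemma mem_of_lt_sSup {I : Set ℝ} (hI : I.OrdConnected) (hB : ¬ BddBelow I)
    {x : ℝ} (hx : x < sSup I) : x ∈ I := by
  obtain ⟨y, hy, hxy⟩ := exists_lt_of_lt_csSup (nonempty_of_not_bddBelow' hB) hx
  exact mem_of_le_of_not_bddBelow hI hB hy hxy.le

lemma mem_of_sInf_lt {I : Set ℝ} (hI : I.OrdConnected) (hA : ¬ BddAbove I)
    {x : ℝ} (hx : sInf I < x) : x ∈ I := by
  obtain ⟨y, hy, hxy⟩ := exists_lt_of_csInf_lt (nonempty_of_not_bddAbove' hA) hx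
  exact mem_of_ge_of_not_bddAbove hI hA hy hxy.le

lemma dist_le_of {D : Type u} [Category.{v} D] {F G : ℝ ⥤ D} {c : ℝ} (hc : 0 ≤ c)
    (h : ∀ ε : ℝ, c < ε → Interleaved ε F G) :
    interleavingDist F G ≤ ENNReal.ofReal c := by
  refine ENNReal.le_of_forall_pos_le_add fun δ hδ _ => ?_
  have hδ' : (0:ℝ) < (δ:ℝ) := hδ
  have h1 : Interleaved (c + δ/2) F G := h _ (by linarith)
  calc interleavingDist F G ≤ ENNReal.ofReal (c + δ/2) := sInf_le ⟨_, h1, rfl⟩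
    _ = ENNReal.ofReal c + ENNReal.ofReal ((δ:ℝ)/2) := ENNReal.ofReal_add hc (by linarith)
    _ ≤ ENNReal.ofReal c + ENNReal.ofReal (δ:ℝ) := by
        gcongr
        linarith
    _ = ENNReal.ofReal c + δ := by rw [ENNReal.ofReal_coe_nnreal]

lemma le_dist_of {D : Type u} [Category.{v} D] {F G : ℝ ⥤ D} {c : ℝ}
    (h : ∀ ε : ℝ, Interleaved ε F G → c ≤ ε) :
    ENNReal.ofReal c ≤ interleavingDist F G := by
  refine le_sInf ?_
  rintro x ⟨ε, hε, rfl⟩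
  exact ENNReal.ofReal_le_ofReal (h ε hε)

lemma dist_eq_top_of {D : Type u} [Category.{v} D] {F G : ℝ ⥤ D}
    (h : ∀ ε : ℝ, ¬ Interleaved ε F G) :
    interleavingDist F G = ⊤ := by
  have : {ε : ℝ | Interleaved ε F G} = ∅ := Set.eq_empty_iff_forall_notMem.mpr h
  rw [interleavingDist, this]
  simp

/-- Swap the two diagrams of an interleaving. -/
def Interleaving.symm' {D : Type u} [Category.{v} D] {ε : ℝ} {F G : ℝ ⥤ D}
    (h : Interleaving ε F G) : Interleaving ε G F where
  hε := h.hε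
  φ := h.ψ
  ψ := h.φ
  natφ := h.natψ
  natψ := h.natφ
  triφ := h.triψ
  triψ := h.triφ

end DistAux


/-- The interleaving distance between interval modules, where at least one of the two
intervals is unbounded:
(1) if `I = I' = ℝ` it is `0`;
(2) if both are unbounded below and bounded above with suprema `b, b'`, it is `|b - b'|`;
(3) if both are unbounded above and bounded below with infima `a, a'`, it is `|a - a'|`;
(4) in all other cases (exactly one is unbounded below, or exactly one is unbounded
above), it is `∞`. -/
theorem chi_dist_unbounded_intervals (𝕜 : Type) [Field 𝕜] (I I' : Set ℝ)
    (hI : I.OrdConnected) (hI' : I'.OrdConnected)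
    (hunb : ¬ Bornology.IsBounded I ∨ ¬ Bornology.IsBounded I') :
    (I = Set.univ → I' = Set.univ →
      interleavingDist (chi 𝕜 I hI) (chi 𝕜 I' hI') = 0) ∧
    (¬ BddBelow I → ¬ BddBelow I' → BddAbove I → BddAbove I' →
      interleavingDist (chi 𝕜 I hI) (chi 𝕜 I' hI') =
        ENNReal.ofReal |sSup I - sSup I'|) ∧
    (¬ BddAbove I → ¬ BddAbove I' → BddBelow I → BddBelow I' →
      interleavingDist (chi 𝕜 I hI) (chi 𝕜 I' hI') =
        ENNReal.ofReal |sInf I - sInf I'|) ∧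
    ((¬ (BddBelow I ↔ BddBelow I') ∨ ¬ (BddAbove I ↔ BddAbove I')) →
      interleavingDist (chi 𝕜 I hI) (chi 𝕜 I' hI') = ⊤) := by

  constructor
  · -- Case 1: I = I' = univ
    intro h1 h2
    subst h1; subst h2
    have hint : Interleaved 0 (chi 𝕜 Set.univ hI) (chi 𝕜 Set.univ hI') :=
      interleaved_of _ _ hI hI' 0 le_rfl (by simp) (by simp) (by simp) (by simp)
        (by simp) (by simp)
    refine le_antisymm ?_ (zero_le)
    have h0 : (0 : ENNReal) ∈ ENNReal.ofReal ''
        {ε : ℝ | Interleaved ε (chi 𝕜 Set.univ hI) (chi 𝕜 Set.univ hI')} :=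
      ⟨0, hint, by simp⟩
    rw [interleavingDist]
    exact sInf_le h0
  refine ⟨?_, ?_, ?_⟩
  · -- Case 2: both unbounded below, bounded above
    intro hbI hbI' haI haI'
    refine le_antisymm ?_ ?_
    · refine dist_le_of (abs_nonneg _) fun ε hε => ?_
      have hε0 : 0 ≤ ε := le_trans (abs_nonneg _) hε.le
      have h1e : sSup I - sSup I' < ε := lt_of_le_of_lt (le_abs_self _) hε
      have h2e : sSup I' - sSup I < ε := by
        have := lt_of_le_of_lt (le_abs_self (sSup I' - sSup I)) (by rwa [abs_sub_comm])
        exact this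
      refine interleaved_of _ _ hI hI' ε hε0 ?_ ?_ ?_ ?_ ?_ ?_
      · intro a b hab ha hb hb'
        exact mem_of_le_of_not_bddBelow hI' hbI' hb' (by linarith)
      · intro a b hab ha ha' hb'
        have hle := le_csSup haI' hb'
        exact mem_of_lt_sSup hI hbI (by linarith)
      · intro a b hab ha hb hb'
        exact mem_of_le_of_not_bddBelow hI hbI hb' (by linarith)
      · intro a b hab ha ha' hb'
        have hle := le_csSup haI hb'
        exact mem_of_lt_sSup hI' hbI' (by linarith)
      · intro a ha ha2
        have hle := le_csSup haI ha2
        exact mem_of_lt_sSup hI' hbI' (by linarith)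
      · intro a ha ha2
        have hle := le_csSup haI' ha2
        exact mem_of_lt_sSup hI hbI (by linarith)
    · refine le_dist_of fun ε hint => ?_
      obtain ⟨h⟩ := hint
      have hε0 : 0 ≤ ε := h.hε
      rw [abs_sub_le_iff]
      constructor
      · by_contra hc; push_neg at hc
        obtain ⟨a, ha1, ha2⟩ := exists_between (show sSup I' - ε < sSup I - (ε + ε) by linarith)
        refine no_interleaving h (a := a) (mem_of_lt_sSup hI hbI (by linarith))
          (mem_of_lt_sSup hI hbI (by linarith)) ?_
        intro hmem
        have := le_csSup haI' hmem
        linarith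
      · by_contra hc; push_neg at hc
        obtain ⟨a, ha1, ha2⟩ := exists_between (show sSup I - ε < sSup I' - (ε + ε) by linarith)
        refine no_interleaving h.symm' (a := a) (mem_of_lt_sSup hI' hbI' (by linarith))
          (mem_of_lt_sSup hI' hbI' (by linarith)) ?_
        intro hmem
        have := le_csSup haI hmem
        linarith
  · -- Case 3: both unbounded above, bounded below
    intro hbI hbI' haI haI'
    refine le_antisymm ?_ ?_
    · refine dist_le_of (abs_nonneg _) fun ε hε => ?_
      have hε0 : 0 ≤ ε := le_trans (abs_nonneg _) hε.le
      have h1e : sInf I - sInf I' < ε := lt_of_le_of_lt (le_abs_self _) hε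
      have h2e : sInf I' - sInf I < ε := by
        have := lt_of_le_of_lt (le_abs_self (sInf I' - sInf I)) (by rwa [abs_sub_comm])
        exact this
      refine interleaved_of _ _ hI hI' ε hε0 ?_ ?_ ?_ ?_ ?_ ?_
      · intro a b hab ha hb hb'
        have hle := csInf_le haI ha
        exact mem_of_sInf_lt hI' hbI' (by linarith)
      · intro a b hab ha ha' hb'
        exact mem_of_ge_of_not_bddAbove hI hbI ha hab
      · intro a b hab ha hb hb'
        have hle := csInf_le haI' ha
        exact mem_of_sInf_lt hI hbI (by linarith)
      · intro a b hab ha ha' hb'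
        exact mem_of_ge_of_not_bddAbove hI' hbI' ha hab
      · intro a ha ha2
        have hle := csInf_le haI ha
        exact mem_of_sInf_lt hI' hbI' (by linarith)
      · intro a ha ha2
        have hle := csInf_le haI' ha
        exact mem_of_sInf_lt hI hbI (by linarith)
    · refine le_dist_of fun ε hint => ?_
      obtain ⟨h⟩ := hint
      have hε0 : 0 ≤ ε := h.hε
      rw [abs_sub_le_iff]
      constructor
      · by_contra hc; push_neg at hc
        obtain ⟨a, ha1, ha2⟩ := exists_between (show sInf I' < sInf I - ε by linarith)
        have haI2 : a ∈ I' := mem_of_sInf_lt hI' hbI' ha1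
        refine no_interleaving h.symm' (a := a) haI2
          (mem_of_ge_of_not_bddAbove hI' hbI' haI2 (by linarith)) ?_
        intro hmem
        have := csInf_le haI hmem
        linarith
      · by_contra hc; push_neg at hc
        obtain ⟨a, ha1, ha2⟩ := exists_between (show sInf I < sInf I' - ε by linarith)
        have haI2 : a ∈ I := mem_of_sInf_lt hI hbI ha1
        refine no_interleaving h (a := a) haI2
          (mem_of_ge_of_not_bddAbove hI hbI haI2 (by linarith)) ?_
        intro hmem
        have := csInf_le haI' hmem
        linarith
  · -- Case 4: mismatch, distance infinite
    intro hcase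
    refine dist_eq_top_of fun ε hint => ?_
    obtain ⟨h⟩ := hint
    have hε0 : 0 ≤ ε := h.hε
    rcases hcase with hc | hc
    · have : (¬ BddBelow I ∧ BddBelow I') ∨ (BddBelow I ∧ ¬ BddBelow I') := by tauto
      rcases this with ⟨hb, hb'⟩ | ⟨hb, hb'⟩
      · obtain ⟨c, hc0⟩ := hb'
        obtain ⟨y, hy, hyc⟩ := not_bddBelow_iff.mp hb c
        refine no_interleaving h (a := y - (ε + ε))
          (mem_of_le_of_not_bddBelow hI hb hy (by linarith))
          (by rw [show y - (ε + ε) + ε + ε = y by ring]; exact hy) ?_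
        intro hmem
        have := hc0 hmem
        linarith
      · obtain ⟨c, hc0⟩ := hb
        obtain ⟨y, hy, hyc⟩ := not_bddBelow_iff.mp hb' c
        refine no_interleaving h.symm' (a := y - (ε + ε))
          (mem_of_le_of_not_bddBelow hI' hb' hy (by linarith))
          (by rw [show y - (ε + ε) + ε + ε = y by ring]; exact hy) ?_
        intro hmem
        have := hc0 hmem
        linarith
    · have : (¬ BddAbove I ∧ BddAbove I') ∨ (BddAbove I ∧ ¬ BddAbove I') := by tauto
      rcases this with ⟨hb, hb'⟩ | ⟨hb, hb'⟩
      · obtain ⟨c, hc0⟩ := hb'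
        obtain ⟨y, hy, hyc⟩ := not_bddAbove_iff.mp hb c
        refine no_interleaving h (a := y) hy
          (mem_of_ge_of_not_bddAbove hI hb hy (by linarith)) ?_
        intro hmem
        have := hc0 hmem
        linarith
      · obtain ⟨c, hc0⟩ := hb
        obtain ⟨y, hy, hyc⟩ := not_bddAbove_iff.mp hb' c
        refine no_interleaving h.symm' (a := y) hy
          (mem_of_ge_of_not_bddAbove hI' hb' hy (by linarith)) ?_
        intro hmem
        have := hc0 hmem
        linarith
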